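/- For every n \geq 1, the symmetric tube S_n^(0) of the star graph S_n = K_{1,n} is isomorphic to the graph obtained from the once-subdivision of the complete graph K_n by attaching one new pendant vertex to each of the n branch vertices (the vertices coming from V(K_n)). -/

import Mathlib

/-!
The darts of `Sₙ` are `(0, leaf)` and `(leaf, 0)`: the former become the branch vertices and the
latter their pendant vertices, the X-edge between `(0, ℓ)` and `(ℓ, 0)` being the pendant edge.
A leaf has only one neighbour, so every pair-vertex sits at the centre and is an unordered pair
of distinct leaves, i.e. a subdivision vertex of `Kₙ`; its two Y-edges go to the darts `(0, a)`
and `(0, b)`, the branch vertices of its edge.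
-/

open SimpleGraph

variable {V : Type*}

/-- A pair-vertex of the symmetric tube: a vertex `v` together with an unordered pair
of two distinct neighbors of `v`. -/
abbrev TubePair (G : SimpleGraph V) : Type _ :=
  {p : V × Sym2 V // ¬ p.2.IsDiag ∧ ∀ x ∈ p.2, G.Adj p.1 x}

/-- The vertex set of the symmetric tube: darts of `G` together with pair-vertices. -/
abbrev TubeVertex (G : SimpleGraph V) : Type _ := G.Dart ⊕ TubePair G

/-- The symmetric tube `G⁽⁰⁾` of a simple graph `G`: an X-edge joins the darts `(v,u)` and
`(u,v)` for each edge `{v,u}` of `G`, and Y-edges join the pair-vertex `(v,{a,b})` to each of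
the darts `(v,a)` and `(v,b)`. -/
def tube (G : SimpleGraph V) : SimpleGraph (TubeVertex G) where
  Adj x y :=
    match x, y with
    | Sum.inl d, Sum.inl d' => d' = d.symm
    | Sum.inl d, Sum.inr p => p.1.1 = d.fst ∧ d.snd ∈ p.1.2
    | Sum.inr p, Sum.inl d => p.1.1 = d.fst ∧ d.snd ∈ p.1.2
    | Sum.inr _, Sum.inr _ => False
  symm := ⟨by
    rintro (d | p) (d' | p') h
    · simp only at h ⊢
      rw [h, SimpleGraph.Dart.symm_symm]
    · exact h
    · exact h
    · exact h⟩
  loopless := ⟨by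
    rintro (d | p) h
    · exact SimpleGraph.Dart.symm_ne d h.symm
    · exact h⟩

/-- The star graph `Sₙ = K_{1,n}` on `Fin (n+1)`: the center is `0` and the `n` leaves are
the nonzero elements. -/
def starGraph (n : ℕ) : SimpleGraph (Fin (n + 1)) where
  Adj x y := (x = 0 ∧ y ≠ 0) ∨ (y = 0 ∧ x ≠ 0)
  symm := ⟨fun x y h => Or.symm h⟩
  loopless := ⟨by rintro x (⟨h1, h2⟩ | ⟨h1, h2⟩) <;> exact h2 h1⟩

/-- The graph obtained from the once-subdivision of the complete graph `Kₙ` by attaching one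
new pendant vertex to each of the `n` branch vertices.  The first summand consists of the
pendant vertices, the second of the branch vertices (the vertices coming from `V(Kₙ)`), and
the third of the subdivision vertices (one for each edge of `Kₙ`). -/
def subdividedCompleteWithPendants (n : ℕ) :
    SimpleGraph (Fin n ⊕ Fin n ⊕ {s : Sym2 (Fin n) // ¬ s.IsDiag}) where
  Adj x y :=
    match x, y with
    | Sum.inl i, Sum.inr (Sum.inl j) => i = j
    | Sum.inr (Sum.inl j), Sum.inl i => i = j
    | Sum.inr (Sum.inl i), Sum.inr (Sum.inr s) => i ∈ s.1
    | Sum.inr (Sum.inr s), Sum.inr (Sum.inl i) => i ∈ s.1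
    | _, _ => False
  symm := ⟨by
    rintro (i | j | s) (i' | j' | s') h <;> simp_all⟩
  loopless := ⟨by
    rintro (i | j | s) h <;> simp_all⟩

namespace Sym2

variable {α β : Type*} {f : α → β}

theorem mem_map_iff_of_injective (hf : Function.Injective f) {a : α} {z : Sym2 α} :
    f a ∈ z.map f ↔ a ∈ z := by
  simp [mem_map, hf.eq_iff]

theorem exists_map_eq_of_forall_mem_range {z : Sym2 β} (h : ∀ b ∈ z, b ∈ Set.range f) :
    ∃ w : Sym2 α, w.map f = z := by
  induction z using Sym2.inductionOn with
  | hf a b =>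
    obtain ⟨a', rfl⟩ := h a (mem_mk_left a b)
    obtain ⟨b', rfl⟩ := h b (mem_mk_right _ b)
    exact ⟨s(a', b'), rfl⟩

theorem isDiag_of_forall_mem_eq {z : Sym2 α} {c : α} (h : ∀ a ∈ z, a = c) : z.IsDiag := by
  induction z using Sym2.inductionOn with
  | hf a b => exact mk_isDiag_iff.mpr ((h a (mem_mk_left a b)).trans (h b (mem_mk_right a b)).symm)

end Sym2

namespace starGraph

variable {n : ℕ}

theorem adj_zero_left {x : Fin (n + 1)} : (_root_.starGraph n).Adj 0 x ↔ x ≠ 0 := by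
  simp [_root_.starGraph]

def pendantDart (i : Fin n) : (_root_.starGraph n).Dart :=
  ⟨(i.succ, 0), Or.inr ⟨rfl, i.succ_ne_zero⟩⟩

def branchDart (i : Fin n) : (_root_.starGraph n).Dart :=
  ⟨(0, i.succ), Or.inl ⟨rfl, i.succ_ne_zero⟩⟩

theorem exists_pendantDart_or_branchDart (d : (_root_.starGraph n).Dart) :
    (∃ i, pendantDart i = d) ∨ ∃ i, branchDart i = d := by
  obtain ⟨⟨x, y⟩, hadj⟩ := d
  obtain ⟨rfl, hy⟩ | ⟨rfl, hx⟩ : (x = 0 ∧ y ≠ 0) ∨ (y = 0 ∧ x ≠ 0) := hadj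
  · obtain ⟨i, rfl⟩ := Fin.exists_succ_eq.mpr hy
    exact Or.inr ⟨i, rfl⟩
  · obtain ⟨i, rfl⟩ := Fin.exists_succ_eq.mpr hx
    exact Or.inl ⟨i, rfl⟩

-- A leaf has a single neighbour, so it carries no pair of distinct neighbours.
theorem tubePair_fst_eq_zero (p : TubePair (_root_.starGraph n)) : p.1.1 = 0 := by
  obtain ⟨⟨v, z⟩, hz, hadj⟩ := p
  by_contra hv
  exact hz (Sym2.isDiag_of_forall_mem_eq fun x hx => ((hadj x hx).resolve_left (hv ·.1)).1)

theorem ne_zero_of_mem_tubePair (p : TubePair (_root_.starGraph n)) {x : Fin (n + 1)}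
    (hx : x ∈ p.1.2) : x ≠ 0 := by
  have hadj := p.2.2 x hx
  rw [tubePair_fst_eq_zero] at hadj
  exact adj_zero_left.mp hadj

def edgePair (s : {s : Sym2 (Fin n) // ¬ s.IsDiag}) : TubePair (_root_.starGraph n) :=
  ⟨(0, s.1.map Fin.succ), by
    refine ⟨(Sym2.isDiag_map (Fin.succ_injective n)).not.mpr s.2, fun x hx => ?_⟩
    obtain ⟨i, -, rfl⟩ := Sym2.mem_map.mp hx
    exact adj_zero_left.mpr i.succ_ne_zero⟩

theorem exists_edgePair_eq (p : TubePair (_root_.starGraph n)) : ∃ s, edgePair s = p := by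
  obtain ⟨z, hz⟩ := Sym2.exists_map_eq_of_forall_mem_range
    fun x hx => Fin.exists_succ_eq.mpr (ne_zero_of_mem_tubePair p hx)
  have hdiag : ¬ z.IsDiag := by
    rw [← Sym2.isDiag_map (Fin.succ_injective n), hz]
    exact p.2.1
  exact ⟨⟨z, hdiag⟩, Subtype.ext (Prod.ext (tubePair_fst_eq_zero p).symm hz)⟩

def toTube : Fin n ⊕ Fin n ⊕ {s : Sym2 (Fin n) // ¬ s.IsDiag} → TubeVertex (_root_.starGraph n)
  | .inl i => .inl (pendantDart i)
  | .inr (.inl i) => .inl (branchDart i)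
  | .inr (.inr s) => .inr (edgePair s)

theorem toTube_injective : Function.Injective (toTube (n := n)) := by
  rintro (i | i | s) (j | j | t) h <;>
    simp_all [toTube, pendantDart, branchDart, edgePair, Dart.ext_iff,
      (Sym2.map.injective (Fin.succ_injective n)).eq_iff, Subtype.ext_iff]

theorem toTube_surjective : Function.Surjective (toTube (n := n)) := by
  rintro (d | p)
  · obtain ⟨i, rfl⟩ | ⟨i, rfl⟩ := exists_pendantDart_or_branchDart d
    exacts [⟨.inl i, rfl⟩, ⟨.inr (.inl i), rfl⟩]
  · obtain ⟨s, rfl⟩ := exists_edgePair_eq p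
    exact ⟨.inr (.inr s), rfl⟩

theorem tube_adj_toTube {x y : Fin n ⊕ Fin n ⊕ {s : Sym2 (Fin n) // ¬ s.IsDiag}} :
    (tube (_root_.starGraph n)).Adj (toTube x) (toTube y) ↔
      (subdividedCompleteWithPendants n).Adj x y := by
  rcases x with i | i | s <;> rcases y with j | j | t <;>
    simp [tube, subdividedCompleteWithPendants, toTube, pendantDart, branchDart, edgePair,
      Dart.ext_iff, Sym2.mem_map_iff_of_injective (Fin.succ_injective n), eq_comm]

noncomputable def subdividedCompleteWithPendantsIsoTube :
    subdividedCompleteWithPendants n ≃g tube (_root_.starGraph n) :=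
  ⟨Equiv.ofBijective toTube ⟨toTube_injective, toTube_surjective⟩, tube_adj_toTube⟩

end starGraph

theorem stmt_4_general (n : ℕ) :
    Nonempty (tube (_root_.starGraph n) ≃g subdividedCompleteWithPendants n) :=
  ⟨starGraph.subdividedCompleteWithPendantsIsoTube.symm⟩

/-- For every `n ≥ 1`, the symmetric tube `Sₙ⁽⁰⁾` of the star graph `Sₙ = K_{1,n}` is
isomorphic to the graph obtained from the once-subdivision of `Kₙ` by attaching one new
pendant vertex to each of the `n` branch vertices. -/
theorem stmt_4 (n : ℕ) (hn : 1 ≤ n) :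
    Nonempty (tube (_root_.starGraph n) ≃g subdividedCompleteWithPendants n) :=
  stmt_4_general n
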